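/- arXiv:2303.05991 — 2 statements merged into one kernel-verified Lean document; each statement's English description precedes it below -/
import Mathlib

section
/- The velocity coordinate of the reachable set of the double integrator at time t is exactly the interval [max(v_min, v₀ + u_min·t), min(v_max, v₀ + u_max·t)] when controls are restricted so the speed bound v ∈ [v_min, v_max] is maintained: every reachable velocity lies in this interval, and (assuming v₀ ∈ [v_min, v_max] and the interval is nonempty) every value in the interval is attained by a constant control. -/
/-!
Integrating the control bounds gives `u_min t ≤ v(t) - v₀ ≤ u_max t`, and the state constraint at
time `t` gives the rest. Conversely, the constant control `(w - v₀) / t` moves the velocity along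
the segment from `v₀` to `w`, which stays in the convex set `[v_min, v_max]`.
-/

open MeasureTheory intervalIntegral Set

lemma integral_mem_Icc_of_forall_mem_Icc {u : ℝ → ℝ} {a b m M : ℝ} (hab : a ≤ b)
    (hu : IntervalIntegrable u volume a b) (hbd : ∀ s ∈ Icc a b, u s ∈ Icc m M) :
    ∫ s in a..b, u s ∈ Icc (m * (b - a)) (M * (b - a)) := by
  have hm := integral_mono_on hab intervalIntegrable_const hu fun s hs => (hbd s hs).1
  have hM := integral_mono_on hab hu intervalIntegrable_const fun s hs => (hbd s hs).2
  rw [intervalIntegral.integral_const, smul_eq_mul, mul_comm] at hm hM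
  exact ⟨hm, hM⟩

lemma add_div_mul_mem_Icc {x y lo hi t s : ℝ} (hx : x ∈ Icc lo hi) (hy : y ∈ Icc lo hi)
    (ht : 0 < t) (hs : s ∈ Icc 0 t) : x + (y - x) / t * s ∈ Icc lo hi := by
  have hst : s / t ∈ Icc (0 : ℝ) 1 := ⟨div_nonneg hs.1 ht.le, (div_le_one ht).2 hs.2⟩
  have hline : x + (y - x) / t * s = AffineMap.lineMap x y (s / t) := by
    rw [AffineMap.lineMap_apply_ring']
    ring
  rw [hline]
  exact (convex_Icc lo hi).lineMap_mem hx hy hst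

theorem stmt_13_general (v₀ u_min u_max v_min v_max t : ℝ)
    (ht : 0 < t)
    (hv₀ : v_min ≤ v₀ ∧ v₀ ≤ v_max) :
    (∀ u : ℝ → ℝ, IntervalIntegrable u volume 0 t →
      (∀ s ∈ Set.Icc (0 : ℝ) t, u_min ≤ u s ∧ u s ≤ u_max) →
      (∀ s ∈ Set.Icc (0 : ℝ) t,
        v_min ≤ v₀ + ∫ r in (0:ℝ)..s, u r ∧ v₀ + (∫ r in (0:ℝ)..s, u r) ≤ v_max) →
      max v_min (v₀ + u_min * t) ≤ v₀ + (∫ s in (0:ℝ)..t, u s) ∧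
        v₀ + (∫ s in (0:ℝ)..t, u s) ≤ min v_max (v₀ + u_max * t)) ∧
    (∀ w : ℝ, max v_min (v₀ + u_min * t) ≤ w → w ≤ min v_max (v₀ + u_max * t) →
      ∃ c : ℝ, u_min ≤ c ∧ c ≤ u_max ∧
        (∀ s ∈ Set.Icc (0 : ℝ) t, v_min ≤ v₀ + c * s ∧ v₀ + c * s ≤ v_max) ∧
        v₀ + c * t = w) := by
  constructor
  · intro u hu hbd hstate
    obtain ⟨hlo, hhi⟩ := integral_mem_Icc_of_forall_mem_Icc ht.le hu hbd
    obtain ⟨hmin, hmax⟩ := hstate t ⟨ht.le, le_rfl⟩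
    rw [sub_zero] at hlo hhi
    exact ⟨max_le hmin (by linarith), le_min hmax (by linarith)⟩
  · intro w hw_lo hw_hi
    obtain ⟨hw_min, hw_ctrl_lo⟩ := max_le_iff.1 hw_lo
    obtain ⟨hw_max, hw_ctrl_hi⟩ := le_min_iff.1 hw_hi
    refine ⟨(w - v₀) / t, ?_, ?_, fun s hs => add_div_mul_mem_Icc hv₀ ⟨hw_min, hw_max⟩ ht hs, ?_⟩
    · rw [le_div_iff₀ ht]; linarith
    · rw [div_le_iff₀ ht]; linarith
    · field_simp; ring

/-- The velocity coordinate of the state-constrained reachable set of the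
double integrator at time `t` is exactly the interval
`[max (v_min) (v₀ + u_min t), min v_max (v₀ + u_max t)]`. -/
theorem stmt_13 (v₀ u_min u_max v_min v_max t : ℝ)
    (hu : u_min < 0) (hu' : 0 < u_max) (ht : 0 < t)
    (hv₀ : v_min ≤ v₀ ∧ v₀ ≤ v_max) :
    (∀ u : ℝ → ℝ, IntervalIntegrable u volume 0 t →
      (∀ s ∈ Set.Icc (0 : ℝ) t, u_min ≤ u s ∧ u s ≤ u_max) →
      (∀ s ∈ Set.Icc (0 : ℝ) t,
        v_min ≤ v₀ + ∫ r in (0:ℝ)..s, u r ∧ v₀ + (∫ r in (0:ℝ)..s, u r) ≤ v_max) →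
      max v_min (v₀ + u_min * t) ≤ v₀ + (∫ s in (0:ℝ)..t, u s) ∧
        v₀ + (∫ s in (0:ℝ)..t, u s) ≤ min v_max (v₀ + u_max * t)) ∧
    (∀ w : ℝ, max v_min (v₀ + u_min * t) ≤ w → w ≤ min v_max (v₀ + u_max * t) →
      ∃ c : ℝ, u_min ≤ c ∧ c ≤ u_max ∧
        (∀ s ∈ Set.Icc (0 : ℝ) t, v_min ≤ v₀ + c * s ∧ v₀ + c * s ≤ v_max) ∧
        v₀ + c * t = w) :=
  stmt_13_general v₀ u_min u_max v_min v_max t ht hv₀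
end

section
/- Extremal (velocity, position) trade-off: for the double integrator with u ∈ [u_min, u_max], if the terminal velocity v(t) = v₁ is fixed, the maximal achievable terminal position is obtained by the bang-bang control applying u_max first and then u_min (one switch), and the minimal by u_min then u_max. In particular, for fixed terminal velocity the set of achievable terminal positions is an interval. -/
/-!
Let `w` be antitone and let `f`, `g` have the same integral over `[0, t]`, with `g - f` changing
sign once, from `+` to `-`, at `σ`. Then
`∫ w g - ∫ w f = ∫ (w s - w σ) (g s - f s) ds ≥ 0`, the integrand being pointwise nonnegative.
For `w s = t - s`, the bang-bang control `u_max`-then-`u_min` crosses every admissible control of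
the same total impulse in this way, and every such control crosses `u_min`-then-`u_max`. The
achievable terminal positions are the image of a convex set of controls under an affine map,
hence convex in `ℝ`; containing their minimum and maximum, they form the interval between them.
-/

open MeasureTheory intervalIntegral Set

theorem integral_antitone_mul_le_of_single_crossing {w f g : ℝ → ℝ} {t σ : ℝ} (ht : 0 ≤ t)
    (hw : Antitone w) (hwc : ContinuousOn w (uIcc 0 t))
    (hf : IntervalIntegrable f volume 0 t) (hg : IntervalIntegrable g volume 0 t)
    (heq : ∫ s in (0:ℝ)..t, f s = ∫ s in (0:ℝ)..t, g s)
    (hbefore : ∀ s ∈ Icc 0 t, s ≤ σ → f s ≤ g s)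
    (hafter : ∀ s ∈ Icc 0 t, σ < s → g s ≤ f s) :
    ∫ s in (0:ℝ)..t, w s * f s ≤ ∫ s in (0:ℝ)..t, w s * g s := by
  have hgf : IntervalIntegrable (fun s => g s - f s) volume 0 t := hg.sub hf
  have hshift : IntervalIntegrable (fun s => (w s - w σ) * (g s - f s)) volume 0 t :=
    hgf.continuousOn_mul (hwc.sub continuousOn_const)
  have hnonneg : 0 ≤ ∫ s in (0:ℝ)..t, (w s - w σ) * (g s - f s) := by
    refine integral_nonneg ht fun s hs => ?_
    rcases le_or_gt s σ with hsσ | hσs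
    · exact mul_nonneg (sub_nonneg.mpr (hw hsσ)) (sub_nonneg.mpr (hbefore s hs hsσ))
    · exact mul_nonneg_of_nonpos_of_nonpos (sub_nonpos.mpr (hw hσs.le))
        (sub_nonpos.mpr (hafter s hs hσs))
  have hdiff : (∫ s in (0:ℝ)..t, w s * g s) - (∫ s in (0:ℝ)..t, w s * f s)
      = (∫ s in (0:ℝ)..t, (w s - w σ) * (g s - f s))
        + w σ * ((∫ s in (0:ℝ)..t, g s) - ∫ s in (0:ℝ)..t, f s) := by
    rw [← integral_sub (hg.continuousOn_mul hwc) (hf.continuousOn_mul hwc),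
      ← integral_sub hg hf, ← intervalIntegral.integral_const_mul,
      ← integral_add hshift (hgf.const_mul _)]
    exact integral_congr fun s _ => by ring
  rw [heq, sub_self, mul_zero, add_zero] at hdiff
  linarith

noncomputable def bangBang (τ a b : ℝ) (s : ℝ) : ℝ := if s ≤ τ then a else b

section BangBang

variable {τ a b : ℝ}

theorem bangBang_of_le {s : ℝ} (h : s ≤ τ) : bangBang τ a b s = a := if_pos h

theorem bangBang_of_lt {s : ℝ} (h : τ < s) : bangBang τ a b s = b := if_neg (not_le.mpr h)

theorem intervalIntegrable_bangBang (x y : ℝ) :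
    IntervalIntegrable (bangBang τ a b) volume x y := by
  have hm : Measurable (bangBang τ a b) :=
    Measurable.ite measurableSet_Iic measurable_const measurable_const
  rw [intervalIntegrable_iff]
  refine Measure.integrableOn_of_bounded (M := max |a| |b|) measure_Ioc_lt_top.ne
    hm.aestronglyMeasurable (Filter.Eventually.of_forall fun s => ?_)
  unfold bangBang
  split_ifs
  · exact le_max_left _ _
  · exact le_max_right _ _

theorem bangBang_mem_Icc {c d : ℝ} (ha : a ∈ Icc c d) (hb : b ∈ Icc c d) (s : ℝ) :
    bangBang τ a b s ∈ Icc c d := by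
  unfold bangBang
  split_ifs
  exacts [ha, hb]

theorem integral_bangBang {t : ℝ} (hτ0 : 0 ≤ τ) (hτt : τ ≤ t) :
    ∫ s in (0:ℝ)..t, bangBang τ a b s = a * τ + b * (t - τ) := by
  rw [← integral_add_adjacent_intervals (intervalIntegrable_bangBang 0 τ)
    (intervalIntegrable_bangBang τ t)]
  have hleft : ∫ s in (0:ℝ)..τ, bangBang τ a b s = a * τ := by
    rw [integral_congr (g := fun _ => a) fun s hs => bangBang_of_le (uIcc_of_le hτ0 ▸ hs).2]
    simp [mul_comm]
  have hright : ∫ s in τ..t, bangBang τ a b s = b * (t - τ) := by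
    rw [integral_congr_ae (g := fun _ => b) (Filter.Eventually.of_forall fun s hs =>
      bangBang_of_lt (uIoc_of_le hτt ▸ hs).1)]
    simp [mul_comm]
  rw [hleft, hright]

variable {w u : ℝ → ℝ} {t : ℝ}

theorem integral_mul_le_integral_mul_bangBang (ht : 0 ≤ t) (hw : Antitone w)
    (hwc : ContinuousOn w (uIcc 0 t)) (hu : IntervalIntegrable u volume 0 t)
    (hbd : ∀ s ∈ Icc 0 t, a ≤ u s ∧ u s ≤ b)
    (heq : ∫ s in (0:ℝ)..t, u s = ∫ s in (0:ℝ)..t, bangBang τ b a s) :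
    ∫ s in (0:ℝ)..t, w s * u s ≤ ∫ s in (0:ℝ)..t, w s * bangBang τ b a s :=
  integral_antitone_mul_le_of_single_crossing ht hw hwc hu (intervalIntegrable_bangBang 0 t) heq
    (fun s hs hsτ => (bangBang_of_le hsτ).symm ▸ (hbd s hs).2)
    (fun s hs hτs => (bangBang_of_lt hτs).symm ▸ (hbd s hs).1)

theorem integral_mul_bangBang_le_integral_mul (ht : 0 ≤ t) (hw : Antitone w)
    (hwc : ContinuousOn w (uIcc 0 t)) (hu : IntervalIntegrable u volume 0 t)
    (hbd : ∀ s ∈ Icc 0 t, a ≤ u s ∧ u s ≤ b)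
    (heq : ∫ s in (0:ℝ)..t, bangBang τ a b s = ∫ s in (0:ℝ)..t, u s) :
    ∫ s in (0:ℝ)..t, w s * bangBang τ a b s ≤ ∫ s in (0:ℝ)..t, w s * u s :=
  integral_antitone_mul_le_of_single_crossing ht hw hwc (intervalIntegrable_bangBang 0 t) hu heq
    (fun s hs hsτ => (bangBang_of_le hsτ).symm ▸ (hbd s hs).1)
    (fun s hs hτs => (bangBang_of_lt hτs).symm ▸ (hbd s hs).2)

end BangBang

theorem convex_setOf_integral_mul {w : ℝ → ℝ} {a b t Δ : ℝ} (hwc : ContinuousOn w (uIcc 0 t)) :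
    Convex ℝ {y : ℝ | ∃ u : ℝ → ℝ, IntervalIntegrable u volume 0 t ∧
      (∀ s ∈ Icc (0 : ℝ) t, a ≤ u s ∧ u s ≤ b) ∧
      (∫ s in (0:ℝ)..t, u s) = Δ ∧ y = ∫ s in (0:ℝ)..t, w s * u s} := by
  rintro _ ⟨u₁, hi₁, hb₁, hΔ₁, rfl⟩ _ ⟨u₂, hi₂, hb₂, hΔ₂, rfl⟩ c d hc hd hcd
  refine ⟨fun s => c * u₁ s + d * u₂ s, (hi₁.const_mul c).add (hi₂.const_mul d),
    fun s hs => convex_Icc a b (hb₁ s hs) (hb₂ s hs) hc hd hcd, ?_, ?_⟩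
  · rw [integral_add (hi₁.const_mul c) (hi₂.const_mul d), intervalIntegral.integral_const_mul,
      intervalIntegral.integral_const_mul, hΔ₁, hΔ₂, ← add_mul, hcd, one_mul]
  · rw [smul_eq_mul, smul_eq_mul, ← intervalIntegral.integral_const_mul,
      ← intervalIntegral.integral_const_mul, ← integral_add
        ((hi₁.continuousOn_mul hwc).const_mul c) ((hi₂.continuousOn_mul hwc).const_mul d)]
    exact integral_congr fun s _ => by ring

/-- For fixed terminal velocity, the maximal terminal position is obtained by
the bang-bang control `u_max` then `u_min`, the minimal by `u_min` then
`u_max`, and the set of achievable terminal positions is an interval. -/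
theorem stmt_15 (v₀ v₁ u_min u_max t : ℝ) (hmm : u_min < u_max) (ht : 0 < t)
    (hI : u_min * t ≤ v₁ - v₀ ∧ v₁ - v₀ ≤ u_max * t)
    (τ τ' : ℝ)
    (hτ : τ = ((v₁ - v₀) - u_min * t) / (u_max - u_min))
    (hτ' : τ' = (u_max * t - (v₁ - v₀)) / (u_max - u_min))
    (ubang ubang' : ℝ → ℝ)
    (hub : ∀ s, ubang s = if s ≤ τ then u_max else u_min)
    (hub' : ∀ s, ubang' s = if s ≤ τ' then u_min else u_max) :
    (∀ u : ℝ → ℝ, IntervalIntegrable u volume 0 t →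
      (∀ s ∈ Set.Icc (0 : ℝ) t, u_min ≤ u s ∧ u s ≤ u_max) →
      (∫ s in (0:ℝ)..t, u s) = v₁ - v₀ →
      (∫ s in (0:ℝ)..t, (t - s) * ubang' s) ≤ (∫ s in (0:ℝ)..t, (t - s) * u s) ∧
        (∫ s in (0:ℝ)..t, (t - s) * u s) ≤ ∫ s in (0:ℝ)..t, (t - s) * ubang s) ∧
    (∃ lo hi : ℝ,
      {y : ℝ | ∃ u : ℝ → ℝ, IntervalIntegrable u volume 0 t ∧
        (∀ s ∈ Set.Icc (0 : ℝ) t, u_min ≤ u s ∧ u s ≤ u_max) ∧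
        (∫ s in (0:ℝ)..t, u s) = v₁ - v₀ ∧
        y = ∫ s in (0:ℝ)..t, (t - s) * u s} = Set.Icc lo hi) := by
  have hd : 0 < u_max - u_min := sub_pos.mpr hmm
  have hτ_mem : τ ∈ Icc 0 t := by
    rw [hτ]; exact ⟨div_nonneg (by linarith) hd.le, (div_le_iff₀ hd).mpr (by linarith)⟩
  have hτ'_mem : τ' ∈ Icc 0 t := by
    rw [hτ']; exact ⟨div_nonneg (by linarith) hd.le, (div_le_iff₀ hd).mpr (by linarith)⟩
  obtain rfl : ubang = bangBang τ u_max u_min := funext hub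
  obtain rfl : ubang' = bangBang τ' u_min u_max := funext hub'
  have hmass : ∫ s in (0:ℝ)..t, bangBang τ u_max u_min s = v₁ - v₀ := by
    rw [integral_bangBang hτ_mem.1 hτ_mem.2, hτ]; field_simp; ring
  have hmass' : ∫ s in (0:ℝ)..t, bangBang τ' u_min u_max s = v₁ - v₀ := by
    rw [integral_bangBang hτ'_mem.1 hτ'_mem.2, hτ']; field_simp; ring
  have hw : Antitone fun s : ℝ => t - s := fun _ _ h => sub_le_sub_left h t
  have hwc : ContinuousOn (fun s : ℝ => t - s) (uIcc 0 t) := by fun_prop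
  have hextremal : ∀ u : ℝ → ℝ, IntervalIntegrable u volume 0 t →
      (∀ s ∈ Icc (0 : ℝ) t, u_min ≤ u s ∧ u s ≤ u_max) →
      (∫ s in (0:ℝ)..t, u s) = v₁ - v₀ →
      (∫ s in (0:ℝ)..t, (t - s) * bangBang τ' u_min u_max s) ≤ (∫ s in (0:ℝ)..t, (t - s) * u s) ∧
        (∫ s in (0:ℝ)..t, (t - s) * u s) ≤ ∫ s in (0:ℝ)..t, (t - s) * bangBang τ u_max u_min s :=
    fun u hu hbd hΔ =>
      ⟨integral_mul_bangBang_le_integral_mul ht.le hw hwc hu hbd (hmass'.trans hΔ.symm),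
        integral_mul_le_integral_mul_bangBang ht.le hw hwc hu hbd (hΔ.trans hmass.symm)⟩
  refine ⟨hextremal, ∫ s in (0:ℝ)..t, (t - s) * bangBang τ' u_min u_max s,
    ∫ s in (0:ℝ)..t, (t - s) * bangBang τ u_max u_min s, Subset.antisymm
    (fun y ⟨u, hu, hbd, hΔ, hy⟩ => hy ▸ hextremal u hu hbd hΔ)
    ((convex_setOf_integral_mul hwc).ordConnected.out
      ⟨bangBang τ' u_min u_max, intervalIntegrable_bangBang 0 t,
        fun s _ => bangBang_mem_Icc ⟨le_rfl, hmm.le⟩ ⟨hmm.le, le_rfl⟩ s, hmass', rfl⟩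
      ⟨bangBang τ u_max u_min, intervalIntegrable_bangBang 0 t,
        fun s _ => bangBang_mem_Icc ⟨hmm.le, le_rfl⟩ ⟨le_rfl, hmm.le⟩ s, hmass, rfl⟩)⟩
end
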